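/- arXiv:1101.5071 — 2 statements merged into one kernel-verified Lean document; each statement's English description precedes it below -/
import Mathlib

section
/- Let d ≥ 3 be odd and λ a strict partition. The modified part lengths of the d̄-quotient partition q̄_d(λ) are pairwise distinct: if z, z' are distinct parts of q̄_d(λ) with d-residues i and j respectively, then |z + d(x_i - x_0)| ≠ |z' + d(x_j - x_0)|, where x_i are bead counts on the minimally normalized d-abacus of D(λ). -/
namespace BarPartitions

/-- A strict (bar) partition given as a strictly decreasing list of positive integers. -/
def IsStrictList (l : List ℕ) : Prop := l.Chain' (· > ·) ∧ ∀ a ∈ l, 0 < a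

/-- The multiset of bar lengths of a strict partition `l = (a₁ > ... > a_m)`:
`⋃ᵢ ({1,…,aᵢ} ∪ {aᵢ + aⱼ : j > i}) \ {aᵢ - aⱼ : j > i}` as multisets. -/
def barMultisetL (l : List ℕ) : Multiset ℕ :=
  ((List.range l.length).map (fun i =>
      ((Multiset.range (l.getD i 0)).map (· + 1))
      + ((l.drop (i + 1)).map (fun b => l.getD i 0 + b) : Multiset ℕ))).sum
  - ((List.range l.length).map (fun i =>
      ((l.drop (i + 1)).map (fun b => l.getD i 0 - b) : Multiset ℕ))).sum

/-- The doubled partition `D(λ)` with Frobenius coordinates `(a₁,…,a_m | a₁-1,…,a_m-1)`: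
row `i` (0-indexed, `i < m`) has `aᵢ + i + 1` cells; the remaining rows are given by the
column lengths `c + a_c` (0-indexed column `c < m`). -/
def doubledP (l : List ℕ) : List ℕ :=
  (List.range l.length).map (fun i => l.getD i 0 + i + 1) ++
  (List.range (l.headD 0 - l.length)).map (fun k =>
    ((List.range l.length).filter (fun c => l.length + k + 1 ≤ c + l.getD c 0)).length)

/-- Length of column `c` of the Young diagram of the partition `μ` (list of parts). -/
def colLen (μ : List ℕ) (c : ℕ) : ℕ := (μ.filter (fun p => c < p)).length

/-- Hook length of the cell `(r, c)` (0-indexed) of the partition `μ`. -/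
def hookLen (μ : List ℕ) (r c : ℕ) : ℕ := (μ.getD r 0 - c) + (colLen μ c - r) - 1

/-- The multiset of hook lengths of the partition `μ`. -/
def hookLengths (μ : List ℕ) : Multiset ℕ :=
  ((List.range μ.length).map (fun r =>
    ((Multiset.range (μ.getD r 0)).map (fun c => hookLen μ r c)))).sum

/-- d-residue of the hand node of any hook in row `r` of `μ`. -/
def handRes (d : ℕ) (μ : List ℕ) (r : ℕ) : ZMod d :=
  (((μ.getD r 0 : ℤ) - 1 - (r : ℤ) : ℤ) : ZMod d)

/-- d-residue of the foot node of any hook in column `c` of `μ`. -/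
def footRes (d : ℕ) (μ : List ℕ) (c : ℕ) : ZMod d :=
  (((c : ℤ) - (colLen μ c : ℤ) + 1 : ℤ) : ZMod d)

/-- The β-set of `μ` with `N` elements (first-column hook lengths, padded with `0` parts). -/
def betaList (μ : List ℕ) (N : ℕ) : List ℕ :=
  (List.range N).map (fun k => μ.getD k 0 + (N - 1 - k))

/-- The least multiple of `d` that is `≥ len`. -/
def minMul (d len : ℕ) : ℕ := d * ((len + d - 1) / d)

/-- Number of beads on runner `i` of the minimally normalized `d`-abacus of `μ`. -/
def beadCountL (d : ℕ) (μ : List ℕ) (i : ℕ) : ℕ :=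
  ((betaList μ (minMul d μ.length)).filter (fun v => v % d = i)).length

/-! ### Finset versions: a strict partition as its finite set of (positive) parts. -/

/-- The parts of a strict partition, sorted decreasingly. -/
def sortedParts (s : Finset ℕ) : List ℕ := (s.sort (· ≤ ·)).reverse

/-- Bead counts of the minimally normalized `d`-abacus of the doubled partition `D(λ)`,
where `λ` is the strict partition with part set `s` (as integers). -/
def beadCount (d : ℕ) (s : Finset ℕ) (i : ℕ) : ℤ :=
  (beadCountL d (doubledP (sortedParts s)) i : ℤ)

/-- The multiset of bar lengths of the strict partition with (positive) part set `s`. -/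
def barMultisetF (s : Finset ℕ) : Multiset ℕ :=
  s.val.bind (fun a => ((Multiset.range a).map (· + 1)).filter (fun h => a - h ∉ s))
  + s.val.bind (fun a => (s.filter (fun b => b < a)).val.map (fun b => a + b))

/-- Removal of one bar of length `h` from the strict partition `s`, yielding `t`:
either remove two parts `a ≠ b` with `a + b = h`, or replace a part `a` by `a - h`
(deleting it when `h = a`), provided `a - h` is not already a part. -/
def RemoveBarLen (h : ℕ) (s t : Finset ℕ) : Prop :=
  (∃ a ∈ s, ∃ b ∈ s, a ≠ b ∧ h = a + b ∧ t = (s.erase a).erase b) ∨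
  (∃ a ∈ s, 0 < h ∧ h ≤ a ∧ a - h ∉ s ∧
    t = if h = a then s.erase a else insert (a - h) (s.erase a))

/-- Removal of one bar of length divisible by `d`. -/
def RemoveDBar (d : ℕ) (s t : Finset ℕ) : Prop := ∃ h, d ∣ h ∧ RemoveBarLen h s t

/-- `c` is the `d̄`-core of `s`: obtained from `s` by removing bars of length divisible
by `d`, and admitting no further such removal. -/
def IsBarCore (d : ℕ) (s c : Finset ℕ) : Prop :=
  Relation.ReflTransGen (RemoveDBar d) s c ∧ ∀ t, ¬ RemoveDBar d c t

/-- The partition (multiset of positive parts) associated to a β-set `X`. -/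
def partitionOfBetaSet (X : Finset ℕ) : Multiset ℕ :=
  (((X.sort (· ≤ ·)).zipIdx.map (fun p => p.1 - p.2) : List ℕ) : Multiset ℕ).filter (fun v => 0 < v)

/-- Positions of the parts of `s` lying on runner `i` of the `d`-abacus. -/
def runnerSet (d i : ℕ) (s : Finset ℕ) : Finset ℕ :=
  (s.filter (fun a => a % d = i)).image (fun a => a / d)

/-- The `i`-th component (`1 ≤ i ≤ (d-1)/2`) of the `d̄`-quotient of `s`: the partition
determined by the pair of runners `(i, d - i)` via the associated charged β-set. -/
def barQuotComp (d i : ℕ) (s : Finset ℕ) : Multiset ℕ :=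
  let A := runnerSet d i s
  let B := runnerSet d (d - i) s
  let N := B.sup id + 1
  partitionOfBetaSet
    ((A.image (fun a => N + a)) ∪ ((Finset.range N).filter (fun b => b ∉ B)).image (fun b => N - 1 - b))

/-- Two strict partitions have the same `d̄`-quotient. -/
def SameBarQuotient (d : ℕ) (s t : Finset ℕ) : Prop :=
  runnerSet d 0 s = runnerSet d 0 t ∧
  ∀ i, 1 ≤ i → i ≤ (d - 1) / 2 → barQuotComp d i s = barQuotComp d i t

/-- `q` is the `d̄`-quotient partition of `s`: the unique strict partition with empty
`d̄`-core and the same `d̄`-quotient as `s`. -/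
def IsBarQuotientPartition (d : ℕ) (s q : Finset ℕ) : Prop :=
  IsBarCore d q ∅ ∧ SameBarQuotient d s q

/-- The set of modified part lengths: a part `p ≡ i (mod d)` is modified to
`|p + d(xᵢ - x₀)|`. -/
def modParts (d : ℕ) (x : ℕ → ℤ) (q : Finset ℕ) : Finset ℕ :=
  q.image (fun (p : ℕ) => ((p : ℤ) + (d : ℤ) * (x (p % d) - x 0)).natAbs)

/-- The multiset of modified bar lengths: a bar of length `h` corresponding to a bead
on runner `i` and an empty spot on runner `j` is modified to `|h + d(xᵢ - xⱼ)|`. -/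
def modBarLengths (d : ℕ) (x : ℕ → ℤ) (q : Finset ℕ) : Multiset ℕ :=
  q.val.bind (fun a =>
    (((Multiset.range a).map (· + 1)).filter (fun h => a - h ∉ q)).map
      (fun (h : ℕ) => ((h : ℤ) + (d : ℤ) * (x (a % d) - x ((a - h) % d))).natAbs))
  + q.val.bind (fun a =>
      (q.filter (fun b => b < a)).val.map
        (fun (b : ℕ) => (((a : ℤ) + (b : ℤ)) + (d : ℤ) * (x (a % d) - x ((d - b % d) % d))).natAbs))

/-!
For `N` a multiple of `d` with `N ≥ λ₁`, the `N`-element β-set of `D(λ)` is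
`(N + λ) ⊔ ([0, N) \ (N - λ))`. Counting residues, `x_i = N / d + c_i - c_{-i}`, where `c_r`
is the number of parts of `λ` congruent to `r` mod `d`; hence `x_i + x_j = 2 x_0` whenever
`i + j ≡ 0 (mod d)`. If `|z + d (x_i - x_0)| = |z' + d (x_j - x_0)|`, equal signs force
`z ≡ z'`, hence `i = j` and `z = z'`; opposite signs force `z + z' ≡ 0`, and the symmetry of
the `x_i` then gives `z + z' = 0`.
-/

open Finset

theorem card_filter_image_of_injOn {α β : Type*} [DecidableEq β] {A : Finset α} {φ : α → β}
    (hφ : Set.InjOn φ A) (P : β → Prop) [DecidablePred P] :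
    #{b ∈ A.image φ | P b} = #{a ∈ A | P (φ a)} := by
  rw [filter_image, card_image_of_injOn (hφ.mono (coe_subset.mpr (filter_subset _ _)))]

theorem card_filter_range_natCast_eq_div {d N : ℕ} [NeZero d] (hN : d ∣ N) (r : ZMod d) :
    #{b ∈ range N | ((b : ℕ) : ZMod d) = r} = N / d := by
  rw [← ZMod.natCast_zmod_val r, ← Nat.count_eq_card_filter_range]
  simp only [ZMod.natCast_eq_natCast_iff]
  rw [Nat.count_modEq_card _ (NeZero.pos d), Nat.mod_eq_zero_of_dvd hN]
  simp

theorem natAbs_add_mul_sub_injective {d : ℕ} (hd : 0 < d) {x : ℕ → ℤ}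
    (hx : ∀ i j, i < d → j < d → d ∣ i + j → x i + x j = 2 * x 0) :
    Function.Injective fun z : ℕ => ((z : ℤ) + d * (x (z % d) - x 0)).natAbs := by
  intro z z' h
  rcases Int.natAbs_eq_natAbs_iff.mp h with h | h
  · have hmod : z % d = z' % d := by
      have : (z : ℤ) ≡ z' [ZMOD d] :=
        Int.modEq_iff_dvd.mpr ⟨x (z % d) - x (z' % d), by linear_combination -h⟩
      exact Int.natCast_modEq_iff.mp this
    rw [hmod] at h
    exact_mod_cast (by linarith : (z : ℤ) = z')
  · have hdvd : d ∣ z % d + z' % d := by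
      have : (d : ℤ) ∣ (z + z' : ℕ) :=
        ⟨2 * x 0 - x (z % d) - x (z' % d), by push_cast; linear_combination h⟩
      rw [Int.natCast_dvd_natCast, Nat.dvd_iff_mod_eq_zero, Nat.add_mod] at this
      exact Nat.dvd_of_mod_eq_zero this
    have hsym := hx _ _ (Nat.mod_lt z hd) (Nat.mod_lt z' hd) hdvd
    have : (z : ℤ) + z' = 0 := by linear_combination h - d * hsym
    omega

theorem le_minMul {d : ℕ} (hd : 0 < d) (n : ℕ) : n ≤ minMul d n := by
  have := Nat.div_add_mod (n + d - 1) d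
  have := Nat.mod_lt (n + d - 1) hd
  unfold minMul
  omega

section SortedParts

variable {s : Finset ℕ}

theorem length_sortedParts (s : Finset ℕ) : (sortedParts s).length = #s := by
  simp [sortedParts]

theorem getD_sortedParts_lt_getD {i j : ℕ} (hij : i < j) (hj : j < #s) :
    (sortedParts s).getD j 0 < (sortedParts s).getD i 0 := by
  rw [← length_sortedParts] at hj
  rw [List.getD_eq_getElem _ _ hj, List.getD_eq_getElem _ _ (hij.trans hj)]
  have hsorted : (sortedParts s).Pairwise (· > ·) := by
    rw [sortedParts, List.pairwise_reverse]
    exact (sortedLT_sort s).pairwise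
  exact List.pairwise_iff_getElem.mp hsorted i j _ hj hij

theorem getD_sortedParts_add_le {i j : ℕ} (hij : i ≤ j) (hj : j < #s) :
    (sortedParts s).getD j 0 + j ≤ (sortedParts s).getD i 0 + i := by
  induction j with
  | zero => rw [Nat.le_zero.mp hij]
  | succ j ih =>
    rcases hij.eq_or_lt with rfl | hlt
    · rfl
    · have := getD_sortedParts_lt_getD (i := j) (j := j + 1) (by omega) hj
      have := ih (by omega) (by omega)
      omega

theorem injOn_getD_sortedParts (s : Finset ℕ) :
    Set.InjOn (fun k => (sortedParts s).getD k 0) (range #s) := by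
  intro i hi j hj hij
  simp only [coe_range, Set.mem_Iio] at hi hj
  by_contra hne
  rcases Nat.lt_or_gt_of_ne hne with h | h
  · exact (getD_sortedParts_lt_getD h hj).ne hij.symm
  · exact (getD_sortedParts_lt_getD h hi).ne hij

theorem image_getD_sortedParts (s : Finset ℕ) :
    (range #s).image (fun k => (sortedParts s).getD k 0) = s := by
  ext a
  simp only [mem_image, mem_range, ← length_sortedParts]
  have hmem : a ∈ sortedParts s ↔ a ∈ s := by simp [sortedParts]
  rw [← hmem, List.mem_iff_getElem]
  constructor
  · rintro ⟨k, hk, rfl⟩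
    exact ⟨k, hk, (List.getD_eq_getElem _ _ hk).symm⟩
  · rintro ⟨k, hk, rfl⟩
    exact ⟨k, hk, List.getD_eq_getElem _ _ hk⟩

theorem getD_sortedParts_mem {k : ℕ} (hk : k < #s) : (sortedParts s).getD k 0 ∈ s := by
  have := mem_image_of_mem (fun k => (sortedParts s).getD k 0) (mem_range.mpr hk)
  rwa [image_getD_sortedParts] at this

theorem exists_getD_sortedParts_eq {a : ℕ} (ha : a ∈ s) :
    ∃ k < #s, (sortedParts s).getD k 0 = a := by
  simpa using (image_getD_sortedParts s).ge ha

theorem headD_sortedParts (s : Finset ℕ) :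
    (sortedParts s).headD 0 = (sortedParts s).getD 0 0 := by
  cases sortedParts s <;> rfl

theorem le_headD_sortedParts {a : ℕ} (ha : a ∈ s) : a ≤ (sortedParts s).headD 0 := by
  obtain ⟨k, hk, rfl⟩ := exists_getD_sortedParts_eq ha
  have := getD_sortedParts_add_le (Nat.zero_le k) hk
  rw [headD_sortedParts]
  omega

theorem card_le_headD_sortedParts (hs : 0 ∉ s) : #s ≤ (sortedParts s).headD 0 := by
  rcases Nat.eq_zero_or_pos #s with h | h
  · omega
  · have hlast := getD_sortedParts_mem (s := s) (k := #s - 1) (by omega)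
    have hpos : 0 < (sortedParts s).getD (#s - 1) 0 :=
      Nat.pos_of_ne_zero fun h0 => hs (h0 ▸ hlast)
    have := getD_sortedParts_add_le (s := s) (Nat.zero_le (#s - 1)) (by omega)
    rw [headD_sortedParts]
    omega

end SortedParts

section DoubledPartition

variable {s : Finset ℕ}

-- For `j > #s`, the length of column `j - 1` of the shifted diagram of `λ`.
def shiftedColLen (s : Finset ℕ) (j : ℕ) : ℕ :=
  #{c ∈ range #s | j ≤ c + (sortedParts s).getD c 0}

theorem shiftedColLen_le_card (s : Finset ℕ) (j : ℕ) : shiftedColLen s j ≤ #s :=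
  (card_filter_le _ _).trans (card_range _).le

theorem shiftedColLen_antitone (s : Finset ℕ) : Antitone (shiftedColLen s) :=
  fun _ _ hij => card_le_card <| monotone_filter_right _ fun _ _ h => hij.trans h

theorem lt_shiftedColLen_iff {c j : ℕ} (hc : c < #s) :
    c < shiftedColLen s j ↔ j ≤ c + (sortedParts s).getD c 0 := by
  constructor
  · intro hlt
    by_contra! hj
    have hsub : {c' ∈ range #s | j ≤ c' + (sortedParts s).getD c' 0} ⊆ range c := by
      intro c' hc'
      rw [mem_filter, mem_range] at hc'
      by_contra hle
      rw [mem_range, not_lt] at hle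
      have := getD_sortedParts_add_le hle hc'.1
      omega
    have := card_le_card hsub
    rw [card_range] at this
    exact hlt.not_ge this
  · intro hj
    have hsub : range (c + 1) ⊆ {c' ∈ range #s | j ≤ c' + (sortedParts s).getD c' 0} := by
      intro c' hc'
      rw [mem_range] at hc'
      have := getD_sortedParts_add_le (Nat.le_of_lt_succ hc') hc
      rw [mem_filter, mem_range]
      omega
    have := card_le_card hsub
    rwa [card_range] at this

theorem shiftedColLen_eq_zero {j : ℕ} (hj : (sortedParts s).headD 0 < j) :
    shiftedColLen s j = 0 := by
  by_contra! h
  have hc : 0 < #s := (Nat.pos_of_ne_zero h).trans_le (shiftedColLen_le_card s j)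
  have := (lt_shiftedColLen_iff hc).mp (Nat.pos_of_ne_zero h)
  rw [headD_sortedParts] at hj
  omega

-- If `j - shiftedColLen s j = λ_c`, then `c < shiftedColLen s j ↔ shiftedColLen s j ≤ c`.
theorem sub_shiftedColLen_notMem {j : ℕ} (hj : #s < j) : j - shiftedColLen s j ∉ s := by
  intro hmem
  obtain ⟨c, hc, hceq⟩ := exists_getD_sortedParts_eq hmem
  have hiff := lt_shiftedColLen_iff (j := j) hc
  have := shiftedColLen_le_card s j
  omega

theorem length_doubledP (hs : 0 ∉ s) :
    (doubledP (sortedParts s)).length = (sortedParts s).headD 0 := by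
  have := card_le_headD_sortedParts hs
  simp only [doubledP, List.length_append, List.length_map, List.length_range,
    length_sortedParts]
  omega

theorem getD_doubledP_of_lt {k : ℕ} (hk : k < #s) :
    (doubledP (sortedParts s)).getD k 0 = (sortedParts s).getD k 0 + k + 1 := by
  rw [doubledP, List.getD_append _ _ _ _ (by simpa [length_sortedParts] using hk),
    List.getD_eq_getElem _ _ (by simpa [length_sortedParts] using hk)]
  simp

theorem getD_doubledP_of_le (hs : 0 ∉ s) {k : ℕ} (hk : #s ≤ k) :
    (doubledP (sortedParts s)).getD k 0 = shiftedColLen s (k + 1) := by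
  rcases lt_or_ge k ((sortedParts s).headD 0) with hk' | hk'
  · rw [doubledP, List.getD_append_right _ _ _ _ (by simpa [length_sortedParts] using hk)]
    simp only [List.length_map, List.length_range, length_sortedParts]
    rw [List.getD_eq_getElem _ _ (by simp only [List.length_map, List.length_range]; omega)]
    simp only [List.getElem_map, List.getElem_range, Nat.add_sub_cancel' hk]
    rfl
  · rw [shiftedColLen_eq_zero (by omega)]
    exact List.getD_eq_default _ _ (by rw [length_doubledP hs]; exact hk')

end DoubledPartition

def residueCount (d : ℕ) (s : Finset ℕ) (r : ZMod d) : ℕ := #{a ∈ s | ((a : ℕ) : ZMod d) = r}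

section BetaNumbers

variable {s : Finset ℕ} {N : ℕ}

theorem image_tsub_subset_range (hs : 0 ∉ s) (hN : (sortedParts s).headD 0 ≤ N) :
    s.image (N - ·) ⊆ range N := by
  intro b hb
  obtain ⟨a, ha, rfl⟩ := mem_image.mp hb
  have := le_headD_sortedParts ha
  have : a ≠ 0 := fun h => hs (h ▸ ha)
  rw [mem_range]
  omega

theorem injOn_tsub_of_headD_le (hN : (sortedParts s).headD 0 ≤ N) :
    Set.InjOn (N - ·) (s : Set ℕ) := fun _ ha _ hb =>
  tsub_inj_right ((le_headD_sortedParts ha).trans hN) ((le_headD_sortedParts hb).trans hN)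

theorem injOn_betaNumber_doubledP_Ico :
    Set.InjOn (fun k => N - 1 - k + shiftedColLen s (k + 1)) (Ico #s N) := by
  intro k hk k' hk' hkk'
  simp only [coe_Ico, Set.mem_Ico] at hk hk' hkk'
  have := shiftedColLen_le_card s (k + 1)
  have := shiftedColLen_le_card s (k' + 1)
  rcases le_total k k' with h | h
  · have := shiftedColLen_antitone s (by omega : k + 1 ≤ k' + 1)
    omega
  · have := shiftedColLen_antitone s (by omega : k' + 1 ≤ k + 1)
    omega

-- The β-numbers of the rows `k ≥ #s` of `D(λ)` fill the complement of `N - λ` in `[0, N)`.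
theorem image_betaNumber_doubledP_Ico (hs : 0 ∉ s) (hN : (sortedParts s).headD 0 ≤ N) :
    (Ico #s N).image (fun k => N - 1 - k + shiftedColLen s (k + 1)) =
      range N \ s.image (N - ·) := by
  have hsub : (Ico #s N).image (fun k => N - 1 - k + shiftedColLen s (k + 1)) ⊆
      range N \ s.image (N - ·) := by
    intro b hb
    obtain ⟨k, hk, rfl⟩ := mem_image.mp hb
    rw [mem_Ico] at hk
    have := shiftedColLen_le_card s (k + 1)
    rw [mem_sdiff, mem_range, mem_image]
    refine ⟨by omega, ?_⟩
    rintro ⟨a, ha, hab⟩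
    have := le_headD_sortedParts ha
    refine sub_shiftedColLen_notMem (s := s) (j := k + 1) (by omega) ?_
    convert ha using 1
    omega
  refine eq_of_subset_of_card_le hsub ?_
  rw [card_sdiff_of_subset (image_tsub_subset_range hs hN), card_range,
    card_image_of_injOn (injOn_tsub_of_headD_le hN),
    card_image_of_injOn injOn_betaNumber_doubledP_Ico, Nat.card_Ico]

theorem card_filter_betaNumbers_doubledP {d : ℕ} [NeZero d] (hs : 0 ∉ s)
    (hN : (sortedParts s).headD 0 ≤ N) (hdN : d ∣ N) (r : ZMod d) :
    #{k ∈ range N | (((doubledP (sortedParts s)).getD k 0 + (N - 1 - k) : ℕ) : ZMod d) = r}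
      + residueCount d s (-r) = residueCount d s r + N / d := by
  have hm : #s ≤ N := (card_le_headD_sortedParts hs).trans hN
  have hN0 : (N : ZMod d) = 0 := (ZMod.natCast_eq_zero_iff N d).mpr hdN
  have hlow : #{k ∈ range #s |
      (((doubledP (sortedParts s)).getD k 0 + (N - 1 - k) : ℕ) : ZMod d) = r} =
      residueCount d s r := by
    calc _ = #{k ∈ range #s | (((sortedParts s).getD k 0 : ℕ) : ZMod d) = r} := by
          refine congrArg card (filter_congr fun k hk => ?_)
          rw [mem_range] at hk
          rw [getD_doubledP_of_lt hk, show (sortedParts s).getD k 0 + k + 1 + (N - 1 - k) =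
            N + (sortedParts s).getD k 0 by omega, Nat.cast_add, hN0, zero_add]
      _ = residueCount d s r := by
          rw [residueCount]
          conv_rhs => rw [← image_getD_sortedParts s]
          rw [card_filter_image_of_injOn (injOn_getD_sortedParts s)]
  have hhigh : #{k ∈ Ico #s N |
      (((doubledP (sortedParts s)).getD k 0 + (N - 1 - k) : ℕ) : ZMod d) = r} +
      residueCount d s (-r) = N / d := by
    calc _ = #{b ∈ range N \ s.image (N - ·) | ((b : ℕ) : ZMod d) = r} +
          #{b ∈ s.image (N - ·) | ((b : ℕ) : ZMod d) = r} := by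
          congr 1
          · rw [← image_betaNumber_doubledP_Ico hs hN,
              card_filter_image_of_injOn injOn_betaNumber_doubledP_Ico]
            refine congrArg card (filter_congr fun k hk => ?_)
            rw [mem_Ico] at hk
            rw [getD_doubledP_of_le hs hk.1, Nat.add_comm]
          · rw [residueCount, card_filter_image_of_injOn (injOn_tsub_of_headD_le hN)]
            refine congrArg card (filter_congr fun a ha => ?_)
            have := le_headD_sortedParts ha
            rw [Nat.cast_sub (by omega), hN0, zero_sub]
            exact neg_eq_iff_eq_neg.symm
      _ = #{b ∈ range N | ((b : ℕ) : ZMod d) = r} := by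
          rw [← card_union_of_disjoint (disjoint_filter_filter sdiff_disjoint), ← filter_union,
            sdiff_union_of_subset (image_tsub_subset_range hs hN)]
      _ = N / d := card_filter_range_natCast_eq_div hdN r
  rw [card_filter, ← sum_range_add_sum_Ico _ hm, ← card_filter, ← card_filter, hlow]
  omega

end BetaNumbers

theorem beadCountL_doubledP_add_residueCount {d : ℕ} [NeZero d] {s : Finset ℕ} (hs : 0 ∉ s)
    {i : ℕ} (hi : i < d) :
    beadCountL d (doubledP (sortedParts s)) i + residueCount d s (-i) =
      residueCount d s i + minMul d ((sortedParts s).headD 0) / d := by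
  set N := minMul d ((sortedParts s).headD 0)
  have hcount : beadCountL d (doubledP (sortedParts s)) i = #{k ∈ range N |
      (((doubledP (sortedParts s)).getD k 0 + (N - 1 - k) : ℕ) : ZMod d) = i} := by
    calc _ = #{k ∈ range N | ((doubledP (sortedParts s)).getD k 0 + (N - 1 - k)) % d = i} := by
          rw [beadCountL, length_doubledP hs, betaList, List.filter_map, List.length_map]
          rfl
      _ = _ := congrArg card (filter_congr fun k _ => by
          rw [ZMod.natCast_eq_natCast_iff', Nat.mod_eq_of_lt hi])
  rw [hcount]
  exact card_filter_betaNumbers_doubledP hs (le_minMul (NeZero.pos d) _) (Dvd.intro _ rfl) _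

theorem beadCount_add_beadCount {d : ℕ} {s : Finset ℕ} (hd : 0 < d) (hs : 0 ∉ s) {i j : ℕ}
    (hi : i < d) (hj : j < d) (hij : d ∣ i + j) :
    beadCount d s i + beadCount d s j = 2 * beadCount d s 0 := by
  have : NeZero d := ⟨hd.ne'⟩
  have hji : (j : ZMod d) = -i := by
    rw [eq_neg_iff_add_eq_zero, add_comm, ← Nat.cast_add, ZMod.natCast_eq_zero_iff]
    exact hij
  have hxi := beadCountL_doubledP_add_residueCount hs hi
  have hxj := beadCountL_doubledP_add_residueCount hs hj
  have hx0 := beadCountL_doubledP_add_residueCount (s := s) hs hd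
  rw [hji, neg_neg] at hxj
  rw [Nat.cast_zero, neg_zero] at hx0
  simp only [beadCount]
  omega

theorem modParts_distinct_general (d : ℕ) (h3 : 3 ≤ d) (s q : Finset ℕ)
    (hs : 0 ∉ s) :
    ∀ z ∈ q, ∀ z' ∈ q, z ≠ z' →
      ((z : ℤ) + (d : ℤ) * (beadCount d s (z % d) - beadCount d s 0)).natAbs ≠
      ((z' : ℤ) + (d : ℤ) * (beadCount d s (z' % d) - beadCount d s 0)).natAbs := by
  intro z _ z' _ hne
  have hd : 0 < d := by omega
  exact (natAbs_add_mul_sub_injective hd fun _ _ => beadCount_add_beadCount hd hs).ne hne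

/-- the modified part lengths of the `d̄`-quotient partition are pairwise
distinct. -/
theorem modParts_distinct (d : ℕ) (hd : Odd d) (h3 : 3 ≤ d) (s q : Finset ℕ)
    (hs : 0 ∉ s) (hq : IsBarQuotientPartition d s q) :
    ∀ z ∈ q, ∀ z' ∈ q, z ≠ z' →
      ((z : ℤ) + (d : ℤ) * (beadCount d s (z % d) - beadCount d s 0)).natAbs ≠
      ((z' : ℤ) + (d : ℤ) * (beadCount d s (z' % d) - beadCount d s 0)).natAbs :=
  modParts_distinct_general d h3 s q hs

end BarPartitions
end

section
/- Suppose x₀, x₁, ..., x_{d-1} are integers with d odd satisfying x_i + x_{i*} = x_j + x_{j*} for all i, j, where i* = d - i for 1 ≤ i ≤ d-1 and 0* = 0. If z, z' are positive integers with z ≡ i, z' ≡ j (mod d), 0 ≤ i, j ≤ d-1, and |z + d(x_i - x_0)| = |z' + d(x_j - x_0)|, then z = z'. -/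
/-!
Write `m(z) = z + d (x_{z mod d} - x₀)`. Since `m(z) ≡ z (mod d)`, equal values `m(z) = m(z')`
force `z ≡ z'`, hence equal corrections and `z = z'`. If instead `m(z) = -m(z')`, then
`z' ≡ -z (mod d)`, so the symmetry gives `x_{z mod d} + x_{z' mod d} = 2 x₀` and
`0 = m(z) + m(z') = z + z'`.
-/

namespace BarPartitions

def modifiedValue (d : ℕ) (x : ℕ → ℤ) (z : ℕ) : ℤ := z + d * (x (z % d) - x 0)

section ModifiedValue

variable {d : ℕ} {x : ℕ → ℤ}

theorem sub_mod_mod_eq_of_dvd_add {a b : ℕ} (h : d ∣ a + b) : (d - a % d) % d = b % d := by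
  rcases Nat.eq_zero_or_pos d with rfl | hd
  · simp_all
  have hab : (d - a % d) + a % d ≡ b + a % d [MOD d] :=
    calc (d - a % d) + a % d = d := Nat.sub_add_cancel (Nat.mod_lt a hd).le
      _ ≡ 0 [MOD d] := Nat.modEq_zero_iff_dvd.2 dvd_rfl
      _ ≡ a + b [MOD d] := (Nat.modEq_zero_iff_dvd.2 h).symm
      _ = b + a := add_comm a b
      _ ≡ b + a % d [MOD d] := (Nat.mod_modEq a d).symm.add_left b
  exact Nat.ModEq.add_right_cancel' _ hab

theorem add_reflect_eq_two_mul
    (hx : ∀ i < d, ∀ j < d, x i + x ((d - i) % d) = x j + x ((d - j) % d)) {i : ℕ} (hi : i < d) :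
    x i + x ((d - i) % d) = 2 * x 0 := by
  have h0 := hx i hi 0 (by omega)
  rw [Nat.sub_zero, Nat.mod_self] at h0
  linarith

theorem modifiedValue_modEq (z : ℕ) : modifiedValue d x z ≡ z [ZMOD d] :=
  Int.modEq_add_fac_self

theorem modifiedValue_injective : Function.Injective (modifiedValue d x) := by
  intro z z' h
  have hmod : z % d = z' % d :=
    Int.natCast_modEq_iff.1 (((modifiedValue_modEq z).symm.trans (h ▸ modifiedValue_modEq z')))
  unfold modifiedValue at h
  rw [hmod] at h
  omega

theorem dvd_add_of_modifiedValue_add_eq_zero {z z' : ℕ}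
    (h : modifiedValue d x z + modifiedValue d x z' = 0) : d ∣ z + z' := by
  have hmod : modifiedValue d x z + modifiedValue d x z' ≡ z + z' [ZMOD d] :=
    (modifiedValue_modEq z).add (modifiedValue_modEq z')
  rw [h] at hmod
  exact_mod_cast Int.modEq_zero_iff_dvd.1 hmod.symm

theorem modifiedValue_add_of_dvd_add
    (hx : ∀ i < d, ∀ j < d, x i + x ((d - i) % d) = x j + x ((d - j) % d)) {z z' : ℕ}
    (h : d ∣ z + z') : modifiedValue d x z + modifiedValue d x z' = z + z' := by
  rcases Nat.eq_zero_or_pos d with rfl | hd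
  · simp [modifiedValue]
  have hsym := add_reflect_eq_two_mul hx (Nat.mod_lt z hd)
  rw [sub_mod_mod_eq_of_dvd_add h] at hsym
  unfold modifiedValue
  linear_combination (d : ℤ) * hsym

end ModifiedValue

theorem modified_abs_inj_general (d : ℕ) (x : ℕ → ℤ)
    (hx : ∀ i < d, ∀ j < d, x i + x ((d - i) % d) = x j + x ((d - j) % d))
    (z z' : ℕ)
    (h : ((z : ℤ) + (d : ℤ) * (x (z % d) - x 0)).natAbs
        = ((z' : ℤ) + (d : ℤ) * (x (z' % d) - x 0)).natAbs) :
    z = z' := by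
  rcases Int.natAbs_eq_natAbs_iff.mp h with heq | heq
  · exact modifiedValue_injective heq
  · have hsum : modifiedValue d x z + modifiedValue d x z' = 0 := by
      unfold modifiedValue; linarith
    have hz_add := modifiedValue_add_of_dvd_add hx (dvd_add_of_modifiedValue_add_eq_zero hsum)
    omega

/-- arithmetic lemma: if `x₀,…,x_{d-1}` satisfy the symmetry
`xᵢ + x_{i*} = xⱼ + x_{j*}` (`i* = (d - i) % d`), and `z, z'` are positive integers with
`|z + d(x_{z mod d} - x₀)| = |z' + d(x_{z' mod d} - x₀)|`, then `z = z'`. -/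
theorem modified_abs_inj (d : ℕ) (hd : Odd d) (h3 : 3 ≤ d) (x : ℕ → ℤ)
    (hx : ∀ i < d, ∀ j < d, x i + x ((d - i) % d) = x j + x ((d - j) % d))
    (z z' : ℕ) (hz : 0 < z) (hz' : 0 < z')
    (h : ((z : ℤ) + (d : ℤ) * (x (z % d) - x 0)).natAbs
        = ((z' : ℤ) + (d : ℤ) * (x (z' % d) - x 0)).natAbs) :
    z = z' :=
  modified_abs_inj_general d x hx z z' h

end BarPartitions
end
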